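/- (Division with remainder relative to a diagram) Let I ⊆ J be ideals in K[[x₁,...,xₙ]], let g¹,...,gˢ ∈ I with {ν(g¹),...,ν(gˢ)} = B(I) and gˢ⁺¹,...,gᵗ ∈ J with {ν(gˢ⁺¹),...,ν(gᵗ)} = B(J) \ N(I), and let Δ₁,...,Δ_t, Δ be the associated decomposition of ℕⁿ (Δᵢ = (ν(gⁱ)+ℕⁿ) minus the earlier Δ_k's, Δ = ℕⁿ \ N(J)). Then an element f ∈ K[[x₁,...,xₙ]] with decomposition f = Σᵢ qᵢgⁱ + r (where ν(gⁱ)+supp(qᵢ) ⊆ Δᵢ and supp(r) ⊆ Δ) satisfies: f ∈ I if and only if q_{s+1} = ... = q_t = 0 and r = 0. -/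

import Mathlib

open Pointwise

/-- The monomial order of the paper: compare the tuples `(α₁, …, αₙ, |α|)`
lexicographically from the right. -/
noncomputable def monOrd {n : ℕ} (α : Fin n →₀ ℕ) : Lex (ℕ × Lex (Fin n → ℕ)) :=
  toLex (∑ i, α i, toLex fun i => α (Fin.rev i))

/-- `a` is the initial exponent `ν f` of `f`. -/
def IsInitExp {K : Type*} [Field K] {n : ℕ} (f : MvPowerSeries (Fin n) K)
    (a : Fin n →₀ ℕ) : Prop :=
  MvPowerSeries.coeff a f ≠ 0 ∧
    ∀ b : Fin n →₀ ℕ, MvPowerSeries.coeff b f ≠ 0 → monOrd a ≤ monOrd b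

/-- The diagram of initial exponents `N(I) = {ν f : f ∈ I, f ≠ 0}`. -/
def initDiagram {K : Type*} [Field K] {n : ℕ} (I : Ideal (MvPowerSeries (Fin n) K)) :
    Set (Fin n →₀ ℕ) :=
  {a | ∃ f ∈ I, IsInitExp f a}

/-- `B` is the smallest finite subset of `N` with `N = B + ℕⁿ`. -/
def IsMinGen {n : ℕ} (N : Set (Fin n →₀ ℕ)) (B : Finset (Fin n →₀ ℕ)) : Prop :=
  ↑B ⊆ N ∧ N = ↑B + (Set.univ : Set (Fin n →₀ ℕ)) ∧
    ∀ B' : Finset (Fin n →₀ ℕ), ↑B' ⊆ N →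
      N = ↑B' + (Set.univ : Set (Fin n →₀ ℕ)) → B ⊆ B'

/-- The region `Δᵢ = (ν(gⁱ) + ℕⁿ) \ (Δ₁ ∪ ⋯ ∪ Δᵢ₋₁)
  = (ν(gⁱ) + ℕⁿ) \ ((ν(g¹)+ℕⁿ) ∪ ⋯ ∪ (ν(gⁱ⁻¹)+ℕⁿ))`. -/
def region {n t : ℕ} (a : Fin t → (Fin n →₀ ℕ)) (i : Fin t) : Set (Fin n →₀ ℕ) :=
  ({a i} + (Set.univ : Set (Fin n →₀ ℕ))) \
    ⋃ k : Fin t, ⋃ _ : k < i, ({a k} + (Set.univ : Set (Fin n →₀ ℕ)))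

/-!
If `f ∈ I`, removing the terms `qᵢ gⁱ` with `gⁱ ∈ I` leaves `h = ∑_{i > s} qᵢ gⁱ + r ∈ I`.
The nonzero summands of `h` have initial exponents `ν(gⁱ) + ν(qᵢ) ∈ Δᵢ` and `ν(r) ∈ Δ`; these
regions are pairwise disjoint, so no cancellation occurs and the smallest of these exponents is
`ν(h) ∈ N(I) = ⋃_{i ≤ s} (ν(gⁱ) + ℕⁿ)`. But this union meets neither `Δᵢ` for `i > s` nor
`Δ ⊆ ℕⁿ ∖ N(J)`.
-/

open Function

section MonomialOrder

variable {n : ℕ}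

lemma monOrd_add (a b : Fin n →₀ ℕ) : monOrd (a + b) = monOrd a + monOrd b := by
  simp only [monOrd, Finsupp.coe_add, Pi.add_apply, Finset.sum_add_distrib]
  rfl

lemma monOrd_injective : Injective (monOrd (n := n)) := fun a b h => by
  ext i
  simpa [monOrd] using congrFun (congrArg (fun x => ofLex (ofLex x).2) h) (Fin.rev i)

lemma eq_and_eq_of_add_eq_of_monOrd_le {b c d e : Fin n →₀ ℕ} (h : b + c = d + e)
    (hd : monOrd d ≤ monOrd b) (he : monOrd e ≤ monOrd c) : d = b ∧ e = c := by
  have h' : monOrd d + monOrd e = monOrd b + monOrd c := by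
    rw [← monOrd_add, ← monOrd_add, h]
  obtain ⟨hdb, hec⟩ := (add_eq_add_iff_eq_and_eq hd he).1 h'
  exact ⟨monOrd_injective hdb, monOrd_injective hec⟩

end MonomialOrder

section InitialExponent

variable {K : Type*} [Field K] {n : ℕ}

lemma exists_isInitExp {f : MvPowerSeries (Fin n) K} (hf : f ≠ 0) : ∃ a, IsInitExp f a := by
  obtain ⟨b, hb⟩ := (MvPowerSeries.ne_zero_iff_exists_coeff_ne_zero f).1 hf
  obtain ⟨a, ha, hmin⟩ := (InvImage.wf monOrd wellFounded_lt).has_min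
    {b | MvPowerSeries.coeff b f ≠ 0} ⟨b, hb⟩
  exact ⟨a, ha, fun b hb => not_lt.1 (hmin b hb)⟩

lemma IsInitExp.ne_zero {f : MvPowerSeries (Fin n) K} {a : Fin n →₀ ℕ} (h : IsInitExp f a) :
    f ≠ 0 := fun hf => h.1 (by rw [hf, map_zero])

lemma isInitExp_monomial_one (a : Fin n →₀ ℕ) :
    IsInitExp (MvPowerSeries.monomial a (1 : K)) a := by
  refine ⟨by simp, fun b hb => le_of_eq ?_⟩
  rw [MvPowerSeries.coeff_monomial] at hb
  rw [(ite_ne_right_iff.1 hb).1]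

lemma IsInitExp.mul {p q : MvPowerSeries (Fin n) K} {a b : Fin n →₀ ℕ}
    (hp : IsInitExp p a) (hq : IsInitExp q b) : IsInitExp (p * q) (a + b) := by
  classical
  refine ⟨?_, fun m hm => ?_⟩
  · rw [MvPowerSeries.coeff_mul, Finset.sum_eq_single (a, b)]
    · exact mul_ne_zero hp.1 hq.1
    · rintro ⟨x, y⟩ hxy hne
      rw [Finset.HasAntidiagonal.mem_antidiagonal] at hxy
      by_contra h0
      obtain ⟨rfl, rfl⟩ := eq_and_eq_of_add_eq_of_monOrd_le hxy
        (hp.2 x (left_ne_zero_of_mul h0)) (hq.2 y (right_ne_zero_of_mul h0))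
      exact hne rfl
    · exact fun h => absurd (by simp) h
  · rw [MvPowerSeries.coeff_mul] at hm
    obtain ⟨⟨x, y⟩, hxy, h0⟩ := Finset.exists_ne_zero_of_sum_ne_zero hm
    rw [Finset.HasAntidiagonal.mem_antidiagonal] at hxy
    rw [← hxy, monOrd_add, monOrd_add]
    exact add_le_add (hp.2 x (left_ne_zero_of_mul h0)) (hq.2 y (right_ne_zero_of_mul h0))

/-- Distinct initial exponents cannot cancel, so the smallest one survives in the sum. -/
lemma IsInitExp.sum_of_injOn {ι : Type*} {S : Finset ι} {p : ι → MvPowerSeries (Fin n) K}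
    {e : ι → Fin n →₀ ℕ} (hS : S.Nonempty) (hp : ∀ j ∈ S, IsInitExp (p j) (e j))
    (he : Set.InjOn e S) : ∃ j ∈ S, IsInitExp (∑ j ∈ S, p j) (e j) := by
  obtain ⟨j, hj, hmin⟩ := S.exists_min_image (monOrd ∘ e) hS
  have hvanish : ∀ k ∈ S, k ≠ j → MvPowerSeries.coeff (e j) (p k) = 0 := by
    intro k hk hkj
    by_contra h
    exact hkj (he hk hj (monOrd_injective (le_antisymm ((hp k hk).2 _ h) (hmin k hk))))
  refine ⟨j, hj, ?_, fun b hb => ?_⟩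
  · rw [map_sum, Finset.sum_eq_single j hvanish (absurd hj)]
    exact (hp j hj).1
  · rw [map_sum] at hb
    obtain ⟨k, hk, hkb⟩ := Finset.exists_ne_zero_of_sum_ne_zero hb
    exact (hmin k hk).trans ((hp k hk).2 b hkb)

lemma initDiagram_mono {I J : Ideal (MvPowerSeries (Fin n) K)} (h : I ≤ J) :
    initDiagram I ⊆ initDiagram J :=
  fun _ ⟨f, hf, hfa⟩ => ⟨f, h hf, hfa⟩

lemma single_add_univ_subset_initDiagram {I : Ideal (MvPowerSeries (Fin n) K)}
    {a : Fin n →₀ ℕ} (h : a ∈ initDiagram I) :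
    {a} + (Set.univ : Set (Fin n →₀ ℕ)) ⊆ initDiagram I := by
  obtain ⟨f, hfI, hfa⟩ := h
  rintro _ ⟨_, rfl, b, -, rfl⟩
  exact ⟨_, Ideal.mul_mem_right _ _ hfI, hfa.mul (isInitExp_monomial_one b)⟩

lemma sum_mem_iff_forall_eq_zero_of_pairwise_disjoint {ι : Type*}
    {I : Ideal (MvPowerSeries (Fin n) K)} {S : Finset ι} {p : ι → MvPowerSeries (Fin n) K}
    {L : ι → Set (Fin n →₀ ℕ)} (hL : Pairwise (Disjoint on L))
    (hIL : ∀ j ∈ S, Disjoint (initDiagram I) (L j))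
    (hpL : ∀ j ∈ S, p j ≠ 0 → ∃ e ∈ L j, IsInitExp (p j) e) :
    ∑ j ∈ S, p j ∈ I ↔ ∀ j ∈ S, p j = 0 := by
  classical
  refine ⟨fun hsum => ?_, fun h => Finset.sum_eq_zero h ▸ I.zero_mem⟩
  by_contra! hne
  obtain ⟨j₀, hj₀, hpj₀⟩ := hne
  have hsupp : ∀ j ∈ S.filter (p · ≠ 0), j ∈ S ∧ p j ≠ 0 := fun j hj => Finset.mem_filter.1 hj
  choose! e heL he using fun j hj => hpL j (hsupp j hj).1 (hsupp j hj).2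
  have hinj : Set.InjOn e (S.filter (p · ≠ 0)) := by
    intro j hj k hk hjk
    by_contra hjk_ne
    exact Set.disjoint_left.1 (hL hjk_ne) (heL j hj) (hjk ▸ heL k hk)
  obtain ⟨j, hj, hsum_init⟩ := IsInitExp.sum_of_injOn
    ⟨j₀, Finset.mem_filter.2 ⟨hj₀, hpj₀⟩⟩ he hinj
  rw [Finset.sum_filter_ne_zero] at hsum_init
  exact Set.disjoint_left.1 (hIL j (hsupp j hj).1) ⟨_, hsum, hsum_init⟩ (heL j hj)

end InitialExponent

section Region

variable {n t : ℕ}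

lemma pairwise_disjoint_region (a : Fin t → Fin n →₀ ℕ) : Pairwise (Disjoint on region a) := by
  intro i j hij
  wlog hlt : i < j generalizing i j
  · exact (this hij.symm ((Ne.lt_or_gt hij).resolve_left hlt)).symm
  exact Set.disjoint_left.2 fun _ hi hj => hj.2 (Set.mem_iUnion₂.2 ⟨i, hlt, hi.1⟩)

/-- The decomposition `Δ₁, …, Δₜ, Δ` of `ℕⁿ`, with the remainder region `Δ = Nᶜ` at `none`. -/
def divisionRegion (a : Fin t → Fin n →₀ ℕ) (N : Set (Fin n →₀ ℕ)) :
    Option (Fin t) → Set (Fin n →₀ ℕ)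
  | none => Nᶜ
  | some i => region a i

lemma pairwise_disjoint_divisionRegion {a : Fin t → Fin n →₀ ℕ} {N : Set (Fin n →₀ ℕ)}
    (h : ∀ i, region a i ⊆ N) : Pairwise (Disjoint on divisionRegion a N) := by
  rintro (_ | i) (_ | j) hij
  · exact absurd rfl hij
  · exact Set.disjoint_compl_left_iff_subset.2 (h j)
  · exact Set.disjoint_compl_right_iff_subset.2 (h i)
  · exact pairwise_disjoint_region a fun h => hij (congrArg some h)

lemma subset_iUnion_of_isMinGen {a : Fin t → Fin n →₀ ℕ} {s : ℕ} {N : Set (Fin n →₀ ℕ)}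
    {B : Finset (Fin n →₀ ℕ)} (hB : IsMinGen N B)
    (hBa : (↑B : Set (Fin n →₀ ℕ)) = {x | ∃ i : Fin t, (i : ℕ) < s ∧ a i = x}) :
    N ⊆ ⋃ k : Fin t, ⋃ _ : (k : ℕ) < s, {a k} + Set.univ := by
  rw [hB.2.1, hBa]
  rintro _ ⟨_, ⟨k, hk, rfl⟩, b, -, rfl⟩
  exact Set.mem_iUnion₂.2 ⟨k, hk, Set.add_mem_add rfl trivial⟩

lemma disjoint_divisionRegion {a : Fin t → Fin n →₀ ℕ} {s : ℕ} {M N : Set (Fin n →₀ ℕ)}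
    (hMN : M ⊆ N) (hM : M ⊆ ⋃ k : Fin t, ⋃ _ : (k : ℕ) < s, {a k} + Set.univ) :
    ∀ j ∈ Finset.insertNone {i : Fin t | s ≤ (i : ℕ)}, Disjoint M (divisionRegion a N j) := by
  refine Finset.forall_mem_insertNone.2
    ⟨Set.disjoint_compl_right_iff_subset.2 hMN, fun i hi => ?_⟩
  refine Set.disjoint_left.2 fun m hmM hm => hm.2 ?_
  obtain ⟨k, hk, hmk⟩ := Set.mem_iUnion₂.1 (hM hmM)
  exact Set.mem_iUnion₂.2 ⟨k, Fin.lt_def.2 (lt_of_lt_of_le hk (by simpa using hi)), hmk⟩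

end Region

section DivisionData

/-- The summands `qᵢ gⁱ` of a division expression, with the remainder `r` at `none`. -/
def divisionSummand {ι R : Type*} [Mul R] (q g : ι → R) (r : R) : Option ι → R
  | none => r
  | some i => q i * g i

lemma sum_mul_add_eq_sum_compl_add_sum_divisionSummand {ι R : Type*} [Fintype ι]
    [DecidableEq ι] [AddCommMonoid R] [Mul R] (q g : ι → R) (r : R) (T : Finset ι) :
    ∑ i, q i * g i + r =
      ∑ i ∈ Tᶜ, q i * g i + ∑ j ∈ Finset.insertNone T, divisionSummand q g r j := by
  rw [Finset.sum_insertNone, ← Finset.sum_compl_add_sum T]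
  simp only [divisionSummand]
  abel

lemma exists_isInitExp_mem_divisionRegion {K : Type*} [Field K] {n t : ℕ}
    {q g : Fin t → MvPowerSeries (Fin n) K} {r : MvPowerSeries (Fin n) K}
    {a : Fin t → Fin n →₀ ℕ} {N : Set (Fin n →₀ ℕ)} (hinit : ∀ i, IsInitExp (g i) (a i))
    (hq : ∀ i b, MvPowerSeries.coeff b (q i) ≠ 0 → a i + b ∈ region a i)
    (hr : ∀ b, MvPowerSeries.coeff b r ≠ 0 → b ∉ N) (j : Option (Fin t))
    (hj : divisionSummand q g r j ≠ 0) :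
    ∃ e ∈ divisionRegion a N j, IsInitExp (divisionSummand q g r j) e := by
  cases j with
  | none =>
    obtain ⟨e, he⟩ := exists_isInitExp hj
    exact ⟨e, hr e he.1, he⟩
  | some i =>
    obtain ⟨e, he⟩ := exists_isInitExp (left_ne_zero_of_mul hj)
    exact ⟨a i + e, hq i e he.1, add_comm e (a i) ▸ he.mul (hinit i)⟩

end DivisionData

theorem mem_ideal_iff_division_data_vanish_general {K : Type*} [Field K] {n s t : ℕ}
    (I J : Ideal (MvPowerSeries (Fin n) K)) (hIJ : I ≤ J)
    (g : Fin t → MvPowerSeries (Fin n) K) (a : Fin t → (Fin n →₀ ℕ))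
    (hinit : ∀ i, IsInitExp (g i) (a i))
    (hgI : ∀ i : Fin t, (i : ℕ) < s → g i ∈ I)
    (hgJ : ∀ i : Fin t, g i ∈ J)
    (hBI : ∃ B : Finset (Fin n →₀ ℕ), IsMinGen (initDiagram I) B ∧
      (↑B : Set (Fin n →₀ ℕ)) = {x | ∃ i : Fin t, (i : ℕ) < s ∧ a i = x})
    (f : MvPowerSeries (Fin n) K) (q : Fin t → MvPowerSeries (Fin n) K)
    (r : MvPowerSeries (Fin n) K)
    (hf : f = ∑ i, q i * g i + r)
    (hq : ∀ (i : Fin t) (b : Fin n →₀ ℕ),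
      MvPowerSeries.coeff b (q i) ≠ 0 → a i + b ∈ region a i)
    (hr : ∀ b : Fin n →₀ ℕ, MvPowerSeries.coeff b r ≠ 0 → b ∉ initDiagram J) :
    f ∈ I ↔ (∀ i : Fin t, s ≤ (i : ℕ) → q i = 0) ∧ r = 0 := by
  classical
  obtain ⟨B, hB, hBa⟩ := hBI
  set T : Finset (Fin t) := {i | s ≤ (i : ℕ)}
  have hlow : ∑ i ∈ Tᶜ, q i * g i ∈ I :=
    Ideal.sum_mem _ fun i hi => Ideal.mul_mem_left _ _ (hgI i (by simpa [T] using hi))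
  have hregJ : ∀ i, region a i ⊆ initDiagram J := fun i =>
    Set.sdiff_subset.trans (single_add_univ_subset_initDiagram ⟨g i, hgJ i, hinit i⟩)
  rw [hf, sum_mul_add_eq_sum_compl_add_sum_divisionSummand q g r T,
    Ideal.add_mem_iff_right _ hlow,
    sum_mem_iff_forall_eq_zero_of_pairwise_disjoint (pairwise_disjoint_divisionRegion hregJ)
      (disjoint_divisionRegion (initDiagram_mono hIJ) (subset_iUnion_of_isMinGen hB hBa))
      (fun j _ => exists_isInitExp_mem_divisionRegion hinit hq hr j),
    Finset.forall_mem_insertNone]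
  simp [divisionSummand, mul_eq_zero_iff_right (hinit _).ne_zero, and_comm]

/-- Hironaka division relative to a pair of diagrams: `f ∈ I` iff the
coefficients `q_{s+1}, …, q_t` and the remainder `r` all vanish. -/
theorem mem_ideal_iff_division_data_vanish {K : Type*} [Field K] {n s t : ℕ}
    (hst : s ≤ t) (I J : Ideal (MvPowerSeries (Fin n) K)) (hIJ : I ≤ J)
    (g : Fin t → MvPowerSeries (Fin n) K) (a : Fin t → (Fin n →₀ ℕ))
    (hinit : ∀ i, IsInitExp (g i) (a i))
    (hgI : ∀ i : Fin t, (i : ℕ) < s → g i ∈ I)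
    (hgJ : ∀ i : Fin t, g i ∈ J)
    (hBI : ∃ B : Finset (Fin n →₀ ℕ), IsMinGen (initDiagram I) B ∧
      (↑B : Set (Fin n →₀ ℕ)) = {x | ∃ i : Fin t, (i : ℕ) < s ∧ a i = x})
    (hBJ : ∃ B : Finset (Fin n →₀ ℕ), IsMinGen (initDiagram J) B ∧
      (↑B : Set (Fin n →₀ ℕ)) \ initDiagram I =
        {x | ∃ i : Fin t, s ≤ (i : ℕ) ∧ a i = x})
    (f : MvPowerSeries (Fin n) K) (q : Fin t → MvPowerSeries (Fin n) K)
    (r : MvPowerSeries (Fin n) K)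
    (hf : f = ∑ i, q i * g i + r)
    (hq : ∀ (i : Fin t) (b : Fin n →₀ ℕ),
      MvPowerSeries.coeff b (q i) ≠ 0 → a i + b ∈ region a i)
    (hr : ∀ b : Fin n →₀ ℕ, MvPowerSeries.coeff b r ≠ 0 → b ∉ initDiagram J) :
    f ∈ I ↔ (∀ i : Fin t, s ≤ (i : ℕ) → q i = 0) ∧ r = 0 :=
  mem_ideal_iff_division_data_vanish_general I J hIJ g a hinit hgI hgJ hBI f q r hf hq hr
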